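/- arXiv:2202.05412 — 2 statements merged into one kernel-verified Lean document; each statement's English description precedes it below -/
import Mathlib

section
/- (Entries of the matrix exponential are exponential polynomials with algebraic data) Let M be an n × n complex matrix all of whose entries are algebraic over ℚ. Then for every pair of indices (i, j) there exist m ∈ ℕ and complex numbers α_1, …, α_m and λ_1, …, λ_m, all algebraic over ℚ, such that (exp M) i j = ∑_{k=1}^m α_k · exp(λ_k). -/
set_option synthInstance.maxHeartbeats 1000000
set_option maxHeartbeats 1000000

open Matrix

/-- The exponential of a nilpotent matrix is a finite sum. -/
lemma exp_nilpotent_eq_sum_aux {n : Type*} [Fintype n] [DecidableEq n]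
    (X : Matrix n n ℂ) (c : ℕ) (hX : X ^ c = 0) :
    NormedSpace.exp X = ∑ k ∈ Finset.range c, ((Nat.factorial k : ℂ))⁻¹ • X ^ k := by
  rw [NormedSpace.exp_eq_tsum (𝕂 := ℂ)]
  refine tsum_eq_sum fun k hk => ?_
  have hck : c ≤ k := le_of_not_gt fun h => hk (Finset.mem_range.2 h)
  rw [pow_eq_zero_of_le hck hX, smul_zero]

/-- Abstract core: if `M = M'.map ψ` for a matrix over an algebraically closed field `K`
of characteristic zero, then every entry of `exp M` is of the form
`∑ k, ψ (α k) * Complex.exp (ψ (l k))`. -/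
lemma exp_entry_exponential_polynomial_aux
    {n : Type*} [Fintype n] [DecidableEq n]
    (K : Type*) [Field K] [IsAlgClosed K] [CharZero K] (ψ : K →+* ℂ)
    (M' : Matrix n n K) (i j : n) :
    ∃ (m : ℕ) (α l : Fin m → K),
      NormedSpace.exp (M'.map ψ) i j = ∑ k, ψ (α k) * Complex.exp (ψ (l k)) := by
  classical
  set e : Module.Basis n K (n → K) := Pi.basisFun K n with hedef
  set f : Module.End K (n → K) := Matrix.toLin e e M' with hfdef
  obtain ⟨N, hN, S, hS, hNnil, hSss, hfNS⟩ :=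
    Module.End.exists_isNilpotent_isSemisimple (f := f)
  have hcomm : Commute S N := by
    rw [Algebra.adjoin_singleton_eq_range_aeval] at hN hS
    obtain ⟨p, hp⟩ := hN
    obtain ⟨q, hq⟩ := hS
    rw [← hp, ← hq, Commute, SemiconjBy, ← _root_.map_mul, ← _root_.map_mul, mul_comm]
  -- eigenspace decomposition of the semisimple part
  have h2 : ∀ μ, S.maxGenEigenspace μ = S.eigenspace μ := fun μ =>
    hSss.isFinitelySemisimple.maxGenEigenspace_eq_eigenspace μ
  have hsup : ⨆ μ, S.eigenspace μ = ⊤ := by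
    simp_rw [← h2]; exact Module.End.iSup_maxGenEigenspace_eq_top S
  have hInt : DirectSum.IsInternal S.eigenspace :=
    (DirectSum.isInternal_submodule_iff_iSupIndep_and_iSup_eq_top _).mpr
      ⟨S.eigenspaces_iSupIndep, hsup⟩
  let v : ∀ μ : K, Module.Basis _ K (S.eigenspace μ) := fun μ => Module.Basis.ofVectorSpace K _
  let b0 := hInt.collectedBasis v
  haveI := FiniteDimensional.fintypeBasisIndex b0
  let σe := b0.indexEquiv e
  let bb : Module.Basis n K (n → K) := b0.reindex σe
  let d : n → K := fun k => (σe.symm k).1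
  have hbb : ∀ k, S (bb k) = d k • bb k := by
    intro k
    refine Module.End.mem_eigenspace_iff.mp ?_
    show bb k ∈ S.eigenspace (σe.symm k).1
    rw [Module.Basis.reindex_apply]
    exact hInt.collectedBasis_mem v _
  -- matrices in the eigenbasis
  let Φ := LinearMap.toMatrixAlgEquiv bb
  have hD : Φ S = Matrix.diagonal d := by
    ext a c
    rw [LinearMap.toMatrixAlgEquiv_apply, hbb, _root_.map_smul, Module.Basis.repr_self]
    by_cases h : a = c
    · subst h; simp
    · simp [Finsupp.single_apply, Matrix.diagonal_apply, h, Ne.symm h]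
  obtain ⟨c, hc⟩ : IsNilpotent (Φ N) := hNnil.map Φ
  have hA : Φ f = Matrix.diagonal d + Φ N := by
    rw [hfNS, map_add, hD, add_comm]
  have hDN : Commute (Matrix.diagonal d) (Φ N) := by
    rw [← hD]; exact hcomm.map Φ
  -- change of basis
  let P : Matrix n n K := e.toMatrix bb
  let Q : Matrix n n K := bb.toMatrix e
  have hPQ : P * Q = 1 := Module.Basis.toMatrix_mul_toMatrix_flip e bb
  have hQP : Q * P = 1 := Module.Basis.toMatrix_mul_toMatrix_flip bb e
  have hM'eq : M' = P * Φ f * Q := by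
    have h1 : LinearMap.toMatrix e e f = M' := by
      rw [hfdef, LinearMap.toMatrix_toLin]
    have h2 : Φ f = LinearMap.toMatrix bb bb f := rfl
    rw [h2, ← h1]
    exact (basis_toMatrix_mul_linearMap_toMatrix_mul_basis_toMatrix e bb e bb f).symm
  -- move to ℂ
  set Ψ : Matrix n n K →+* Matrix n n ℂ := ψ.mapMatrix with hΨdef
  have hPQc : Ψ P * Ψ Q = 1 := by rw [← _root_.map_mul, hPQ, _root_.map_one]
  have hQPc : Ψ Q * Ψ P = 1 := by rw [← _root_.map_mul, hQP, _root_.map_one]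
  let U : (Matrix n n ℂ)ˣ := ⟨Ψ P, Ψ Q, hPQc, hQPc⟩
  have hMc : M'.map ψ = (U : Matrix n n ℂ) * Ψ (Matrix.diagonal d + Φ N) * (↑U⁻¹ : Matrix n n ℂ) := by
    rw [hM'eq, hA]
    show (P * (Matrix.diagonal d + Φ N) * Q).map ψ = Ψ P * Ψ (Matrix.diagonal d + Φ N) * Ψ Q
    rw [show ∀ X : Matrix n n K, X.map ψ = Ψ X from fun _ => rfl,
      _root_.map_mul, _root_.map_mul]
  have hsplit : Ψ (Matrix.diagonal d + Φ N)
      = Matrix.diagonal (fun k => ψ (d k)) + Ψ (Φ N) := by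
    rw [_root_.map_add]
    congr 1
    exact Matrix.diagonal_map (map_zero ψ)
  have hcommc : Commute (Matrix.diagonal fun k => ψ (d k)) (Ψ (Φ N)) := by
    have := hDN.map Ψ
    rwa [show Ψ (Matrix.diagonal d) = Matrix.diagonal (fun k => ψ (d k)) from
      Matrix.diagonal_map (map_zero ψ)] at this
  have hNc : (Ψ (Φ N)) ^ c = 0 := by rw [← _root_.map_pow, hc, _root_.map_zero]
  -- compute the exponential
  have hexpM : NormedSpace.exp (M'.map ψ)
      = (U : Matrix n n ℂ) * (Matrix.diagonal (fun k => Complex.exp (ψ (d k)))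
          * NormedSpace.exp (Ψ (Φ N))) * (↑U⁻¹ : Matrix n n ℂ) := by
    rw [hMc, Matrix.exp_units_conj]
    congr 2
    rw [hsplit, Matrix.exp_add_of_commute _ _ hcommc, Matrix.exp_diagonal]
    congr 1
    rw [Pi.exp_def]
    funext k
    rw [Complex.exp_eq_exp_ℂ]
  have hsmul : ∀ (a : K) (X : Matrix n n K), Ψ (a • X) = ψ a • Ψ X := by
    intro a X
    ext p q
    simp [hΨdef, RingHom.mapMatrix_apply, Matrix.map_apply, Matrix.smul_apply, smul_eq_mul]
  set E : Matrix n n K := ∑ k ∈ Finset.range c, ((Nat.factorial k : K))⁻¹ • (Φ N) ^ k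
    with hEdef
  have hexpN : NormedSpace.exp (Ψ (Φ N)) = Ψ E := by
    rw [exp_nilpotent_eq_sum_aux _ c hNc, hEdef, map_sum]
    refine Finset.sum_congr rfl fun k _ => ?_
    rw [hsmul, _root_.map_pow, map_inv₀, map_natCast]
  -- final assembly
  have hentry : NormedSpace.exp (M'.map ψ) i j
      = ∑ k : n, ψ (P i k) * Complex.exp (ψ (d k)) * ψ ((E * Q) k j) := by
    rw [hexpM, hexpN]
    show (Ψ P * (Matrix.diagonal (fun k => Complex.exp (ψ (d k))) * Ψ E) * Ψ Q) i j = _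
    rw [mul_assoc, mul_assoc, ← _root_.map_mul, ← mul_assoc, Matrix.mul_apply]
    refine Finset.sum_congr rfl fun k _ => ?_
    rw [Matrix.mul_diagonal]
    rfl
  refine ⟨Fintype.card n,
    fun t => P i ((Fintype.equivFin n).symm t) * (E * Q) ((Fintype.equivFin n).symm t) j,
    fun t => d ((Fintype.equivFin n).symm t), ?_⟩
  rw [hentry, ← Equiv.sum_comp (Fintype.equivFin n).symm
    (fun k => ψ (P i k) * Complex.exp (ψ (d k)) * ψ ((E * Q) k j))]
  refine Finset.sum_congr rfl fun t _ => ?_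
  rw [_root_.map_mul]
  ring

/-- (Entries of the matrix exponential are exponential polynomials with algebraic
data) If all entries of `M` are algebraic over `ℚ`, then each entry of `exp M` is
of the form `∑ k, α k * exp (l k)` with all `α k`, `l k` algebraic over `ℚ`. -/
theorem exp_entry_exponential_polynomial
    {n : Type*} [Fintype n] [DecidableEq n]
    (M : Matrix n n ℂ) (hM : ∀ i j, IsAlgebraic ℚ (M i j)) (i j : n) :
    ∃ (m : ℕ) (α l : Fin m → ℂ),
      (∀ k, IsAlgebraic ℚ (α k)) ∧ (∀ k, IsAlgebraic ℚ (l k)) ∧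
      NormedSpace.exp M i j = ∑ k, α k * Complex.exp (l k) := by
  classical
  set K : IntermediateField ℚ ℂ := algebraicClosure ℚ ℂ with hKdef
  haveI : IsAlgClosed K := (algebraicClosure.isAlgClosure (F := ℚ) (E := ℂ)).isAlgClosed
  haveI : CharZero K := charZero_of_injective_algebraMap (algebraMap ℚ K).injective
  set ψ : K →+* ℂ := algebraMap K ℂ with hψdef
  set M' : Matrix n n K := fun a b => ⟨M a b, mem_algebraicClosure_iff.mpr (hM a b)⟩
    with hM'def
  have hMM' : M = M'.map ψ := by ext a b; rfl
  obtain ⟨m, α, l, h⟩ := exp_entry_exponential_polynomial_aux K ψ M' i j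
  refine ⟨m, fun k => ψ (α k), fun k => ψ (l k), ?_, ?_, ?_⟩
  · exact fun k => mem_algebraicClosure_iff.mp (α k).2
  · exact fun k => mem_algebraicClosure_iff.mp (l k).2
  · rw [hMM']
    exact h
end

section
/- (Entries of the phase integral are exponential polynomials with algebraic data) Let A, B, C be n × n complex matrices all of whose entries are algebraic over ℚ, and let a ≤ b be rational numbers. Then for every pair of indices (i, j) there exist m ∈ ℕ and complex numbers α_1, …, α_m and λ_1, …, λ_m, all algebraic over ℚ, such that the (i, j) entry of the matrix-valued integral ∫_a^b exp((b − t) • A) · C · exp((t − a) • B) dt equals ∑_{k=1}^m α_k · exp(λ_k). -/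
open Matrix NormedSpace Filter Topology

/-! ### Auxiliary lemmas proved with the `L∞`-operator norm instances.

The statements below only mention topological notions (`Summable`, `Continuous`,
`Tendsto` of slopes), which are definitionally independent of the choice of norm,
so they can be transported to the entrywise-norm world used in the main theorem. -/

section LinftyWorld

attribute [local instance] Matrix.linftyOpNormedRing Matrix.linftyOpNormedAlgebra

variable {n : Type*} [Fintype n] [DecidableEq n]

private lemma summable_aux (X : Matrix n n ℂ) :
    Summable (fun r : ℕ => ((r.factorial : ℂ))⁻¹ • X ^ r) :=
  expSeries_summable' (𝕂 := ℂ) X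

private lemma cont_aux (A B C : Matrix n n ℂ) (a b : ℝ) :
    Continuous (fun t : ℝ => exp ((b - t) • A) * C * exp ((t - a) • B)) := by
  refine Continuous.mul (Continuous.mul ?_ continuous_const) ?_
  · exact exp_continuous.comp ((continuous_const.sub continuous_id).smul continuous_const)
  · exact exp_continuous.comp ((continuous_id.sub continuous_const).smul continuous_const)

private lemma toBlocks₁₂_mul_aux (A B C : Matrix n n ℂ) (U : Matrix (n ⊕ n) (n ⊕ n) ℂ) :
    (fromBlocks A C 0 B * U).toBlocks₁₂ = A * U.toBlocks₁₂ + C * U.toBlocks₂₂ := by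
  conv_lhs => rw [← fromBlocks_toBlocks U]
  rw [fromBlocks_multiply, toBlocks_fromBlocks₁₂]

private lemma toBlocks₂₂_pow_aux (A B C : Matrix n n ℂ) (r : ℕ) :
    ∃ X, (fromBlocks A C 0 B) ^ r = fromBlocks (A ^ r) X 0 (B ^ r) := by
  induction r with
  | zero => exact ⟨0, by rw [pow_zero, pow_zero, pow_zero, fromBlocks_one]⟩
  | succ r ih =>
    obtain ⟨X, hX⟩ := ih
    refine ⟨A ^ r * C + X * B, ?_⟩
    rw [pow_succ, hX, fromBlocks_multiply]
    simp [pow_succ]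

private lemma toBlocks₂₂_exp_aux (A B C : Matrix n n ℂ) :
    (exp (fromBlocks A C 0 B)).toBlocks₂₂ = exp B := by
  classical
  let L : Matrix (n ⊕ n) (n ⊕ n) ℂ →ₗ[ℂ] Matrix n n ℂ :=
    { toFun := toBlocks₂₂
      map_add' := fun X Y => rfl
      map_smul' := fun c X => rfl }
  have h1 : (exp (fromBlocks A C 0 B)).toBlocks₂₂
      = L.toContinuousLinearMap (exp (fromBlocks A C 0 B)) := rfl
  rw [h1, exp_eq_tsum (𝕂 := ℂ),
    L.toContinuousLinearMap.map_tsum (summable_aux (fromBlocks A C 0 B))]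
  have h2 : ∀ r : ℕ, L.toContinuousLinearMap (((r.factorial : ℂ))⁻¹ • (fromBlocks A C 0 B) ^ r)
      = ((r.factorial : ℂ))⁻¹ • B ^ r := by
    intro r
    obtain ⟨X, hX⟩ := toBlocks₂₂_pow_aux A B C r
    show ((r.factorial : ℂ))⁻¹ • ((fromBlocks A C 0 B) ^ r).toBlocks₂₂ = _
    rw [hX, toBlocks_fromBlocks₂₂]
  rw [tsum_congr h2, exp_eq_tsum (𝕂 := ℂ)]

private lemma slope_aux (A B C : Matrix n n ℂ) (a b : ℝ) (t : ℝ) :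
    Tendsto (slope (fun t : ℝ =>
        exp ((b - t) • A) * (exp ((t - a) • fromBlocks A C 0 B)).toBlocks₁₂) t)
      (𝓝[≠] t) (𝓝 (exp ((b - t) • A) * C * exp ((t - a) • B))) := by
  refine hasDerivAt_iff_tendsto_slope.1 ?_
  set M : Matrix (n ⊕ n) (n ⊕ n) ℂ := fromBlocks A C 0 B with hM
  -- derivative of `U s = exp ((s - a) • M)`
  have hU : HasDerivAt (fun s : ℝ => exp ((s - a) • M)) (M * exp ((t - a) • M)) t := by
    have base := hasDerivAt_exp_smul_const' (𝕂 := ℝ) M (t - a)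
    have hs : HasDerivAt (fun s : ℝ => s - a) 1 t := (hasDerivAt_id t).sub_const a
    have := HasDerivAt.scomp t base hs
    simp at this; exact this
  -- derivative of `E s = exp ((b - s) • A)`
  have hE : HasDerivAt (fun s : ℝ => exp ((b - s) • A))
      (-(A * exp ((b - t) • A))) t := by
    have base := hasDerivAt_exp_smul_const' (𝕂 := ℝ) A (b - t)
    have hs : HasDerivAt (fun s : ℝ => b - s) (-1) t := (hasDerivAt_id t).const_sub b
    have := HasDerivAt.scomp t base hs
    simp at this; exact this
  -- derivative of `X s = toBlocks₁₂ (U s)`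
  have hB22 : (exp ((t - a) • M)).toBlocks₂₂ = exp ((t - a) • B) := by
    rw [hM, fromBlocks_smul, smul_zero, toBlocks₂₂_exp_aux]
  have h12 : HasDerivAt (fun s : ℝ => (exp ((s - a) • M)).toBlocks₁₂)
      (A * (exp ((t - a) • M)).toBlocks₁₂ + C * exp ((t - a) • B)) t := by
    let T : Matrix (n ⊕ n) (n ⊕ n) ℂ →ₗ[ℝ] Matrix n n ℂ :=
      { toFun := toBlocks₁₂
        map_add' := fun X Y => rfl
        map_smul' := fun c X => rfl }
    have hT := T.toContinuousLinearMap.hasFDerivAt (x := exp ((t - a) • M))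
    have hcomp := hT.comp_hasDerivAt t hU
    have : T.toContinuousLinearMap (M * exp ((t - a) • M))
        = A * (exp ((t - a) • M)).toBlocks₁₂ + C * exp ((t - a) • B) := by
      show (M * exp ((t - a) • M)).toBlocks₁₂ = _
      rw [hM, toBlocks₁₂_mul_aux, hB22]
    replace hcomp := hcomp.congr_deriv this
    exact hcomp
  have hprod := hE.mul h12
  have hcommute : exp ((b - t) • A) * A = A * exp ((b - t) • A) :=
    (((Commute.refl A).smul_right (b - t)).exp_right).symm.eq
  set E := exp ((b - t) • A)
  set X := (exp ((t - a) • M)).toBlocks₁₂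
  set F := exp ((t - a) • B)
  have hval : -(A * E) * X + E * (A * X + C * F) = E * C * F := by
    have h1 : E * (A * X) = A * E * X := by rw [← mul_assoc, hcommute]
    calc -(A * E) * X + E * (A * X + C * F)
        = -(A * E * X) + (A * E * X + E * (C * F)) := by rw [mul_add, h1, neg_mul]
      _ = E * (C * F) := neg_add_cancel_left _ _
      _ = E * C * F := by rw [mul_assoc]
  rw [hval] at hprod
  exact hprod

end LinftyWorld

attribute [local instance] Matrix.normedAddCommGroup Matrix.normedSpace

section MainWorld

variable {n : Type*} [Fintype n] [DecidableEq n]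

/-- Van Loan's formula: the phase integral is the top-right block of a block-matrix
exponential. -/
private lemma integral_eq_block (A B C : Matrix n n ℂ) (a b : ℝ) :
    (∫ t in a..b, exp ((b - t) • A) * C * exp ((t - a) • B)) =
      (exp ((b - a) • fromBlocks A C 0 B)).toBlocks₁₂ := by
  have hder : ∀ t ∈ Set.uIcc a b, HasDerivAt
      (fun t : ℝ => exp ((b - t) • A) * (exp ((t - a) • fromBlocks A C 0 B)).toBlocks₁₂)
      (exp ((b - t) • A) * C * exp ((t - a) • B)) t := by
    intro t _
    refine hasDerivAt_iff_tendsto_slope.2 ?_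
    exact slope_aux A B C a b t
  have hFTC := intervalIntegral.integral_eq_sub_of_hasDerivAt hder
    ((cont_aux A B C a b).intervalIntegrable a b)
  rw [hFTC, sub_self, zero_smul, exp_zero, one_mul, sub_self, zero_smul, exp_zero]
  have h1 : (1 : Matrix (n ⊕ n) (n ⊕ n) ℂ).toBlocks₁₂ = 0 := by
    rw [← fromBlocks_one (l := n) (m := n) (α := ℂ), toBlocks_fromBlocks₁₂]
  rw [h1, mul_zero, sub_zero]

/-- Key analytic fact: if `v` is a generalised eigenvector of `M` with eigenvalue `μ`,
then `exp M *ᵥ v` is `exp μ` times an explicit finite sum. -/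
private lemma exp_mulVec (M : Matrix n n ℂ) (μ : ℂ) (v : n → ℂ) (k : ℕ)
    (hv : ((M - μ • 1) ^ k) *ᵥ v = 0) :
    exp M *ᵥ v = Complex.exp μ •
      ∑ r ∈ Finset.range k, ((r.factorial : ℂ))⁻¹ • (((M - μ • 1) ^ r) *ᵥ v) := by
  classical
  have hsplit : M = μ • 1 + (M - μ • 1) := by abel
  have hcomm : Commute (μ • (1 : Matrix n n ℂ)) (M - μ • 1) := (Commute.one_left _).smul_left μ
  have hexp1 : exp (μ • (1 : Matrix n n ℂ)) = Complex.exp μ • 1 := by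
    rw [smul_one_eq_diagonal, exp_diagonal, Pi.exp_def, ← Complex.exp_eq_exp_ℂ,
      ← smul_one_eq_diagonal]
  have key : exp M = Complex.exp μ • exp (M - μ • 1) := by
    conv_lhs => rw [hsplit]
    rw [Matrix.exp_add_of_commute _ _ hcomm, hexp1, smul_mul_assoc, one_mul]
  rw [key, Matrix.smul_mulVec]
  congr 1
  set Nm := M - μ • 1 with hNm
  let L : Matrix n n ℂ →ₗ[ℂ] (n → ℂ) :=
    { toFun := fun X => X *ᵥ v
      map_add' := fun X Y => Matrix.add_mulVec X Y v
      map_smul' := fun c X => Matrix.smul_mulVec c X v }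
  have hL : exp Nm *ᵥ v = L.toContinuousLinearMap (exp Nm) := rfl
  have hexp : exp Nm = ∑' r : ℕ, ((r.factorial : ℂ))⁻¹ • Nm ^ r := by
    rw [exp_eq_tsum (𝕂 := ℂ)]
  rw [hL, hexp, L.toContinuousLinearMap.map_tsum (summable_aux Nm)]
  have hzero : ∀ r : ℕ, r ∉ Finset.range k →
      L.toContinuousLinearMap (((r.factorial : ℂ))⁻¹ • Nm ^ r) = 0 := by
    intro r hr
    have hkr : k ≤ r := by simpa using hr
    have hpv : Nm ^ r *ᵥ v = 0 := by
      have : Nm ^ r = Nm ^ (r - k) * Nm ^ k := by rw [← pow_add, Nat.sub_add_cancel hkr]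
      rw [this, ← Matrix.mulVec_mulVec, hv, Matrix.mulVec_zero]
    show (((r.factorial : ℂ))⁻¹ • Nm ^ r) *ᵥ v = 0
    rw [Matrix.smul_mulVec, hpv, smul_zero]
  rw [tsum_eq_sum hzero]
  refine Finset.sum_congr rfl fun r _ => ?_
  show (((r.factorial : ℂ))⁻¹ • Nm ^ r) *ᵥ v = ((r.factorial : ℂ))⁻¹ • (Nm ^ r *ᵥ v)
  rw [Matrix.smul_mulVec]

set_option synthInstance.maxHeartbeats 1000000 in
set_option maxHeartbeats 2000000 in
/-- Each entry of the exponential of a matrix with algebraic entries is an exponential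
polynomial with algebraic data. -/
private lemma entry_exp_algebraic (M : Matrix n n ℂ) (hM : ∀ i j, IsAlgebraic ℚ (M i j))
    (i j : n) :
    ∃ (m : ℕ) (α l : Fin m → ℂ),
      (∀ k, IsAlgebraic ℚ (α k)) ∧ (∀ k, IsAlgebraic ℚ (l k)) ∧
      (exp M) i j = ∑ k, α k * Complex.exp (l k) := by
  classical
  set K := algebraicClosure ℚ ℂ with hKdef
  haveI : IsAlgClosed K := (algebraicClosure.isAlgClosure ℚ ℂ).isAlgClosed
  let φ : ↥K →+* ℂ := algebraMap ↥K ℂ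
  have hφ : ∀ x : ↥K, φ x = (x : ℂ) := fun x => rfl
  set Mk : Matrix n n ↥K := fun i' j' => ⟨M i' j', mem_algebraicClosure_iff.2 (hM i' j')⟩
    with hMkdef
  have hMmap : ∀ i' j', φ (Mk i' j') = M i' j' := fun _ _ => rfl
  set f : Module.End ↥K (n → ↥K) := Matrix.toLinAlgEquiv' Mk with hfdef
  have htop : ⨆ μ, f.maxGenEigenspace μ = ⊤ := Module.End.iSup_maxGenEigenspace_eq_top f
  have hmem : (Pi.single j 1 : n → ↥K) ∈ ⨆ μ, f.maxGenEigenspace μ := by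
    rw [htop]; trivial
  rw [Submodule.mem_iSup_iff_exists_finsupp] at hmem
  obtain ⟨c, hc, hcsum⟩ := hmem
  -- the term corresponding to a single generalised eigenvalue
  have hterm : ∀ μ : ↥K, ∃ αμ : ℂ, IsAlgebraic ℚ αμ ∧
      (exp M *ᵥ fun x => φ (c μ x)) i = αμ * Complex.exp (φ μ) := by
    intro μ
    obtain ⟨k, hk⟩ := (Module.End.mem_maxGenEigenspace f μ (c μ)).1 (hc μ)
    have haction : ∀ (r : ℕ) (w : n → ↥K), ((f - μ • 1) ^ r) w = ((Mk - μ • 1) ^ r) *ᵥ w := by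
      intro r
      induction r with
      | zero => intro w; simp
      | succ r ih =>
        intro w
        rw [pow_succ, pow_succ, Module.End.mul_apply, ih ((f - μ • 1) w)]
        have hbase : (f - μ • 1) w = (Mk - μ • 1) *ᵥ w := by
          rw [Matrix.sub_mulVec, LinearMap.sub_apply, LinearMap.smul_apply,
            Module.End.one_apply, hfdef, Matrix.toLinAlgEquiv'_apply,
            Matrix.smul_mulVec, Matrix.one_mulVec]
        rw [hbase, Matrix.mulVec_mulVec]
    have hK1 : ((Mk - μ • 1) ^ k) *ᵥ (c μ) = 0 := by
      rw [← haction k (c μ)]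
      exact hk
    have hmapsub : ∀ r : ℕ, ((Mk - μ • 1) ^ r).map φ = (M - (φ μ) • 1) ^ r := by
      intro r
      have h0 : (Mk - μ • 1).map φ = M - (φ μ) • 1 := by
        ext i' j'
        simp only [Matrix.map_apply, Matrix.sub_apply, Matrix.smul_apply, Matrix.one_apply,
          smul_eq_mul, map_sub, _root_.map_mul, mul_ite, mul_one, mul_zero, apply_ite φ,
          _root_.map_one, _root_.map_zero, hMmap]
      have h1 : ∀ r : ℕ, ((Mk - μ • 1) ^ r).map φ = φ.mapMatrix ((Mk - μ • 1) ^ r) :=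
        fun _ => rfl
      rw [h1, map_pow]
      have h2 : φ.mapMatrix (Mk - μ • 1) = (Mk - μ • 1).map φ := rfl
      rw [h2, h0]
    have hC1 : ((M - (φ μ) • 1) ^ k) *ᵥ (fun x => φ (c μ x)) = 0 := by
      funext x
      have h3 := (RingHom.map_mulVec φ ((Mk - μ • 1) ^ k) (c μ) x).symm
      rw [hmapsub] at h3
      have h4 : ((M - (φ μ) • 1) ^ k *ᵥ (φ ∘ (c μ : n → ↥K))) x = φ 0 := by
        rw [h3, hK1]; rfl
      rw [map_zero] at h4; exact h4
    have hform := exp_mulVec M (φ μ) (fun x => φ (c μ x)) k hC1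
    refine ⟨(∑ r ∈ Finset.range k,
      ((r.factorial : ℂ))⁻¹ • (((M - (φ μ) • 1) ^ r) *ᵥ fun x => φ (c μ x))) i, ?_, ?_⟩
    · apply mem_algebraicClosure_iff.1
      rw [Finset.sum_apply]
      refine sum_mem fun r _ => ?_
      rw [Pi.smul_apply, smul_eq_mul]
      refine mul_mem (inv_mem ?_) ?_
      · exact natCast_mem K r.factorial
      · have h5 := (RingHom.map_mulVec φ ((Mk - μ • 1) ^ r) (c μ) i).symm
        rw [hmapsub] at h5
        have h6 : ((M - (φ μ) • 1) ^ r *ᵥ fun x => φ (c μ x)) i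
            = φ (((Mk - μ • 1) ^ r *ᵥ (c μ : n → ↥K)) i) := by
          rw [← h5]; rfl
        rw [h6, hφ]
        exact SetLike.coe_mem _
    · rw [hform, Pi.smul_apply, smul_eq_mul, mul_comm]
  choose w hw1 hw2 using hterm
  have hpoint : (exp M) i j = ∑ μ ∈ c.support, w μ * Complex.exp (φ μ) := by
    have h1 : (exp M) i j = (exp M *ᵥ (Pi.single j 1 : n → ℂ)) i := by
      rw [Matrix.mulVec_single]
      exact (mul_one _).symm
    have h2 : (Pi.single j 1 : n → ℂ) = ∑ μ ∈ c.support, (fun x => φ (c μ x)) := by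
      funext x
      have h3 : (Pi.single j (1 : ↥K) : n → ↥K) x = ∑ μ ∈ c.support, c μ x := by
        rw [← hcsum, Finsupp.sum]
        simp [Finset.sum_apply]
      have h4 : (Pi.single j 1 : n → ℂ) x = φ ((Pi.single j (1 : ↥K) : n → ↥K) x) := by
        rcases eq_or_ne x j with h | h
        · subst h; simp [Pi.single_apply]
        · simp [Pi.single_apply, h]
      rw [h4, h3, map_sum, Finset.sum_apply]
    have h5 : exp M *ᵥ (∑ μ ∈ c.support, (fun x => φ (c μ x)))
        = ∑ μ ∈ c.support, exp M *ᵥ (fun x => φ (c μ x)) := by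
      have h7 := map_sum (Matrix.mulVecLin (exp M)) (fun μ => (fun x => φ (c μ x))) c.support
      simp only [Matrix.mulVecLin_apply] at h7
      exact h7
    rw [h1, h2, h5, Finset.sum_apply]
    exact Finset.sum_congr rfl fun μ _ => hw2 μ
  have e : ↥(c.support) ≃ Fin (c.support.card) := Fintype.equivFinOfCardEq (Fintype.card_coe _)
  refine ⟨c.support.card, fun t => w (e.symm t), fun t => φ (e.symm t),
    fun t => hw1 _, fun t => ?_, ?_⟩
  · exact mem_algebraicClosure_iff.1 (SetLike.coe_mem _)
  · rw [hpoint, ← Finset.sum_coe_sort c.support (fun μ => w μ * Complex.exp (φ μ))]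
    exact Fintype.sum_equiv e (fun x => w ↑x * Complex.exp (φ ↑x))
      (fun t => w (e.symm t) * Complex.exp (φ (e.symm t))) (fun x => by simp)

private lemma isAlgebraic_mul' {x y : ℂ} (hx : IsAlgebraic ℚ x) (hy : IsAlgebraic ℚ y) :
    IsAlgebraic ℚ (x * y) :=
  mem_algebraicClosure_iff.1
    (mul_mem (mem_algebraicClosure_iff.2 hx) (mem_algebraicClosure_iff.2 hy))

end MainWorld

/-- (Entries of the phase integral are exponential polynomials with algebraic data)
If all entries of `A`, `B`, `C` are algebraic over `ℚ` and `a ≤ b` are rationals,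
then each entry of `∫ t in a..b, exp((b − t) • A) * C * exp((t − a) • B) dt` is of
the form `∑ k, α k * exp (l k)` with all `α k`, `l k` algebraic over `ℚ`. -/
theorem phase_integral_entry_exponential_polynomial
    {n : Type*} [Fintype n] [DecidableEq n]
    (A B C : Matrix n n ℂ)
    (hA : ∀ i j, IsAlgebraic ℚ (A i j))
    (hB : ∀ i j, IsAlgebraic ℚ (B i j))
    (hC : ∀ i j, IsAlgebraic ℚ (C i j))
    (a b : ℚ) (hab : a ≤ b) (i j : n) :
    ∃ (m : ℕ) (α l : Fin m → ℂ),
      (∀ k, IsAlgebraic ℚ (α k)) ∧ (∀ k, IsAlgebraic ℚ (l k)) ∧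
      (∫ t in (a : ℝ)..(b : ℝ),
          NormedSpace.exp ((((b : ℝ) - t)) • A) * C *
            NormedSpace.exp (((t - (a : ℝ))) • B)) i j =
        ∑ k, α k * Complex.exp (l k) := by
  classical
  have hint := integral_eq_block A B C (a : ℝ) (b : ℝ)
  rw [hint]
  have hrat : IsAlgebraic ℚ (Complex.ofReal ((b : ℝ) - (a : ℝ))) := by
    have h1 : Complex.ofReal ((b : ℝ) - (a : ℝ)) = ((b - a : ℚ) : ℂ) := by push_cast; ring
    rw [h1]
    simpa using isAlgebraic_algebraMap (R := ℚ) (A := ℂ) (b - a)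
  have hent : ∀ i' j', IsAlgebraic ℚ
      ((((b : ℝ) - (a : ℝ)) • fromBlocks A C 0 B : Matrix (n ⊕ n) (n ⊕ n) ℂ) i' j') := by
    intro i' j'
    have hsmul : ∀ z : ℂ, IsAlgebraic ℚ z →
        IsAlgebraic ℚ (((b : ℝ) - (a : ℝ)) • z) := by
      intro z hz
      rw [Complex.real_smul]
      exact isAlgebraic_mul' hrat hz
    rcases i' with i' | i' <;> rcases j' with j' | j' <;>
      simp only [Matrix.smul_apply, Matrix.fromBlocks_apply₁₁, Matrix.fromBlocks_apply₁₂,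
        Matrix.fromBlocks_apply₂₁, Matrix.fromBlocks_apply₂₂, Matrix.zero_apply]
    · exact hsmul _ (hA i' j')
    · exact hsmul _ (hC i' j')
    · simpa using isAlgebraic_zero
    · exact hsmul _ (hB i' j')
  obtain ⟨m, α, l, h1, h2, h3⟩ :=
    entry_exp_algebraic (((b : ℝ) - (a : ℝ)) • fromBlocks A C 0 B) hent (Sum.inl i) (Sum.inr j)
  exact ⟨m, α, l, h1, h2, h3⟩
end
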